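/- Let C be a coalgebra over a field k. The linear map φ : coker Δ → C ⊗ C⁺ induced by c ⊗ d ↦ c ⊗ d − Δ(c) ε(d) is a well-defined isomorphism of k-vector spaces, with inverse induced by c ⊗ d ↦ class of c ⊗ d. -/
import Mathlib


open TensorProduct LinearMap

variable (k C : Type) [Field k] [AddCommGroup C] [Module k C] [Coalgebra k C]

/-- `C⁺ = ker ε`. -/
noncomputable def Cplus : Submodule k C := LinearMap.ker (Coalgebra.counit (R := k))

/-- The map `C ⊗ C → C ⊗ C`, `c ⊗ d ↦ c ⊗ d − Δ(c) ε(d)`, whose corestriction to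
`C ⊗ C⁺` induces the isomorphism `coker Δ ≅ C ⊗ C⁺`. -/
noncomputable def fmap : C ⊗[k] C →ₗ[k] C ⊗[k] C :=
  LinearMap.id -
    (Coalgebra.comul (R := k)) ∘ₗ (TensorProduct.rid k C).toLinearMap
      ∘ₗ lTensor C (Coalgebra.counit (R := k))

/-- **`coker Δ ≅ C ⊗ C⁺`.** For a coalgebra `C` over a field `k`, the linear map
`coker Δ → C ⊗ C⁺` induced by `c ⊗ d ↦ c ⊗ d − Δ(c) ε(d)` is a well-defined
isomorphism of `k`-vector spaces, with inverse induced by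
`c ⊗ d ↦ (class of c ⊗ d)`. -/
theorem coker_comul_iso :
    ∃ φ : ((C ⊗[k] C) ⧸ LinearMap.range (Coalgebra.comul (R := k) (A := C))) ≃ₗ[k]
        C ⊗[k] ↥(Cplus k C),
      (∀ x : C ⊗[k] C,
        lTensor C (Cplus k C).subtype (φ (Submodule.Quotient.mk x)) = fmap k C x) ∧
      (∀ y : C ⊗[k] ↥(Cplus k C),
        φ.symm y = Submodule.Quotient.mk (lTensor C (Cplus k C).subtype y)) := by
  classical
  set ε : C →ₗ[k] k := Coalgebra.counit (R := k) with hε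
  set Δ : C →ₗ[k] C ⊗[k] C := Coalgebra.comul (R := k) with hΔ
  set j : C ⊗[k] ↥(Cplus k C) →ₗ[k] C ⊗[k] C := lTensor C (Cplus k C).subtype with hj
  set e : C ⊗[k] C →ₗ[k] C ⊗[k] k := lTensor C ε with he
  -- exactness
  have hexact0 : Function.Exact (Cplus k C).subtype ε := by
    intro y
    constructor
    · intro hy; exact ⟨⟨y, hy⟩, rfl⟩
    · rintro ⟨z, rfl⟩; exact z.2
  have hexact : Function.Exact j e := Module.Flat.lTensor_exact C hexact0
  have hinj : Function.Injective j :=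
    Module.Flat.lTensor_preserves_injective_linearMap _ (Submodule.injective_subtype _)
  set p : C ⊗[k] C →ₗ[k] C ⊗[k] C :=
    Δ ∘ₗ (TensorProduct.rid k C).toLinearMap ∘ₗ e with hp
  have hfmap : fmap k C = LinearMap.id - p := rfl
  have h1 : ∀ c : C, e (Δ c) = c ⊗ₜ[k] 1 := fun c =>
    congr($(Coalgebra.lTensor_counit_comp_comul (R := k) (A := C)) c)
  -- e ∘ fmap = 0
  have he_fmap : ∀ x, e (fmap k C x) = 0 := by
    intro x
    induction x using TensorProduct.induction_on with
    | zero => simp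
    | add a b ha hb => rw [map_add, map_add, ha, hb, add_zero]
    | tmul c d =>
      have : fmap k C (c ⊗ₜ[k] d) = c ⊗ₜ[k] d - ε d • Δ c := by
        simp [hfmap, hp, LinearMap.comp_apply, he, TensorProduct.rid_tmul, map_smul]
      rw [this, map_sub, map_smul, h1]
      rw [sub_eq_zero, TensorProduct.smul_tmul', TensorProduct.smul_tmul, smul_eq_mul, mul_one]
      simp [he]
  have hmem : ∀ x, fmap k C x ∈ LinearMap.range j := fun x =>
    (hexact (fmap k C x)).mp (he_fmap x)
  set f₀ : C ⊗[k] C →ₗ[k] C ⊗[k] ↥(Cplus k C) :=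
    (LinearEquiv.ofInjective j hinj).symm.toLinearMap ∘ₗ
      LinearMap.codRestrict (LinearMap.range j) (fmap k C) hmem with hf₀
  have hjf₀ : ∀ x, j (f₀ x) = fmap k C x := by
    intro x
    have h2 : (LinearEquiv.ofInjective j hinj) (f₀ x) = ⟨fmap k C x, hmem x⟩ :=
      (LinearEquiv.ofInjective j hinj).apply_symm_apply _
    calc j (f₀ x) = ((LinearEquiv.ofInjective j hinj) (f₀ x) : C ⊗[k] C) :=
          (LinearEquiv.ofInjective_apply j (h := hinj) _).symm
      _ = fmap k C x := congrArg Subtype.val h2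
  have hfΔ : ∀ c : C, fmap k C (Δ c) = 0 := by
    intro c
    simp [hfmap, hp, LinearMap.comp_apply, h1 c]
  have hker : LinearMap.range Δ ≤ LinearMap.ker f₀ := by
    rintro _ ⟨c, rfl⟩
    have : j (f₀ (Δ c)) = 0 := by rw [hjf₀, hfΔ]
    exact hinj (by simpa using this)
  set f : ((C ⊗[k] C) ⧸ LinearMap.range Δ) →ₗ[k] C ⊗[k] ↥(Cplus k C) :=
    Submodule.liftQ _ f₀ hker with hf
  set g : C ⊗[k] ↥(Cplus k C) →ₗ[k] ((C ⊗[k] C) ⧸ LinearMap.range Δ) :=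
    (LinearMap.range Δ).mkQ ∘ₗ j with hg
  have hfg : ∀ y, f (g y) = y := by
    intro y
    have hey : e (j y) = 0 := (hexact (j y)).mpr ⟨y, rfl⟩
    have : f (g y) = f₀ (j y) := rfl
    rw [this]
    apply hinj
    rw [hjf₀]
    simp [hfmap, hp, LinearMap.comp_apply, hey]
  have hgf : ∀ x, g (f x) = x := by
    intro x
    obtain ⟨x, rfl⟩ := Submodule.Quotient.mk_surjective _ x
    have : g (f (Submodule.Quotient.mk x)) = Submodule.Quotient.mk (j (f₀ x)) := rfl
    rw [this, hjf₀, Submodule.Quotient.eq]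
    exact ⟨-((TensorProduct.rid k C) (e x)), by
      simp [hfmap, hp, LinearMap.comp_apply]⟩
  refine ⟨LinearEquiv.ofLinear f g (LinearMap.ext hfg) (LinearMap.ext hgf),
    fun x => ?_, fun y => rfl⟩
  show j (f (Submodule.Quotient.mk x)) = fmap k C x
  have : f (Submodule.Quotient.mk x) = f₀ x := rfl
  rw [this, hjf₀]
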